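/- Let G be a group with a short exact sequence 0 → K → G → H → 0 where K admits a left-invariant linear order and H admits a left-invariant circular order. Then G admits a left-invariant circular order such that the restriction to K recovers the linear order (in the sense that for k₁, k₂, k₃ ∈ K, c(k₁,k₂,k₃) is determined by the linear order on K) and the projection to H is order-preserving on triples mapping to distinct elements of H. -/

import Mathlib

/-- A circular order (as a set) on `G`: a cocycle `c : G³ → {-1,0,1}`
vanishing exactly on degenerate triples and satisfying the 2-cocycle identity. -/
def IsCircularOrder {G : Type*} (c : G → G → G → ℤ) : Prop :=
  (∀ x y z : G, c x y z = -1 ∨ c x y z = 0 ∨ c x y z = 1) ∧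
  (∀ x y z : G, c x y z = 0 ↔ (x = y ∨ y = z ∨ x = z)) ∧
  (∀ g₀ g₁ g₂ g₃ : G, c g₁ g₂ g₃ - c g₀ g₂ g₃ + c g₀ g₁ g₃ - c g₀ g₁ g₂ = 0)

/-- Invariance of a circular order under left multiplication. -/
def IsLeftInvariant {G : Type*} [Group G] (c : G → G → G → ℤ) : Prop :=
  ∀ g x y z : G, c (g * x) (g * y) (g * z) = c x y z

/-- A left-invariant linear order on a group `G`: a strict total order
invariant under left multiplication. -/
def IsLeftInvariantLinearOrder {G : Type*} [Group G] (lt : G → G → Prop) : Prop :=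
  IsStrictTotalOrder G lt ∧ ∀ f a b : G, lt a b → lt (f * a) (f * b)

/-- The circular order induced by a linear order `lt`:
`+1` on cyclically increasing triples, `-1` on cyclically decreasing ones, `0` otherwise. -/
noncomputable def circOfLinear {G : Type*} (lt : G → G → Prop) (x y z : G) : ℤ := by
  classical exact
    if (lt x y ∧ lt y z) ∨ (lt y z ∧ lt z x) ∨ (lt z x ∧ lt x y) then 1
    else if (lt x z ∧ lt z y) ∨ (lt z y ∧ lt y x) ∨ (lt y x ∧ lt x z) then -1
    else 0

/-!
The circular order on `G` is lexicographic: first compare the images in `H` with `cH`, and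
break ties inside a coset of `K` with the linear order. As a cochain it is `π^* cH + δβ`,
where `β a b = ±1` compares `a` and `b` when they lie in the same coset `a · f(K)` and is `0`
otherwise. A coboundary `δβ` is automatically a cocycle, so only the values need checking,
and a case split on which of the three images in `H` coincide shows that they are `±1`
exactly on nondegenerate triples.
-/

section Coboundary

variable {α : Type*}

def coboundary (b : α → α → ℤ) (x y z : α) : ℤ := b y z - b x z + b x y

lemma coboundary_cocycle (b : α → α → ℤ) (g₀ g₁ g₂ g₃ : α) :
    coboundary b g₁ g₂ g₃ - coboundary b g₀ g₂ g₃ + coboundary b g₀ g₁ g₃ -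
      coboundary b g₀ g₁ g₂ = 0 := by
  unfold coboundary; ring

lemma coboundary_eq_zero_of_degenerate {b : α → α → ℤ} (hb : ∀ x y, b y x = -b x y)
    {x y z : α} (h : x = y ∨ y = z ∨ x = z) : coboundary b x y z = 0 := by
  have hdiag : ∀ x, b x x = 0 := fun x => by linarith [hb x x]
  unfold coboundary
  rcases h with rfl | rfl | rfl
  · rw [hdiag]; ring
  · rw [hdiag]; ring
  · rw [hdiag, hb x y]; ring

noncomputable def cmpSign (r : α → α → Prop) (a b : α) : ℤ := by
  classical exact if r a b then 1 else if r b a then -1 else 0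

variable {r : α → α → Prop}

lemma cmpSign_swap [IsStrictOrder α r] (a b : α) : cmpSign r b a = -cmpSign r a b := by
  by_cases hab : r a b
  · simp [cmpSign, hab, asymm hab]
  · by_cases hba : r b a <;> simp [cmpSign, hab, hba]

lemma cmpSign_map_map {β : Type*} {s : β → β → Prop} {φ : β → α}
    (h : ∀ a b, r (φ a) (φ b) ↔ s a b) (a b : β) : cmpSign r (φ a) (φ b) = cmpSign s a b := by
  unfold cmpSign; split_ifs <;> simp_all

lemma cmpSign_eq_zero_of_not_rel {a b : α} (hab : ¬r a b) (hba : ¬r b a) : cmpSign r a b = 0 := by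
  simp [cmpSign, hab, hba]

lemma cmpSign_eq_one_or_neg_one {a b : α} (h : r a b ∨ r b a) :
    cmpSign r a b = 1 ∨ cmpSign r a b = -1 := by
  unfold cmpSign; split_ifs <;> simp_all

lemma coboundary_cmpSign_eq_one_or_neg_one [IsStrictOrder α r] {x y z : α}
    (hxy : r x y ∨ r y x) (hyz : r y z ∨ r z y) (hxz : r x z ∨ r z x) :
    coboundary (cmpSign r) x y z = 1 ∨ coboundary (cmpSign r) x y z = -1 := by
  rcases hxy with hxy | hxy <;> rcases hyz with hyz | hyz <;> rcases hxz with hxz | hxz <;>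
    simp [coboundary, cmpSign, hxy, hyz, hxz, asymm hxy, asymm hyz, asymm hxz] <;>
    first
    | exact asymm (_root_.trans hxy hyz) hxz
    | exact asymm (_root_.trans hyz hxy) hxz

lemma circOfLinear_eq_coboundary_cmpSign [IsStrictTotalOrder α r] :
    circOfLinear r = coboundary (cmpSign r) := by
  funext a b c
  rcases trichotomous (r := r) a b with h₁ | h₁ | h₁ <;>
    rcases trichotomous (r := r) b c with h₂ | h₂ | h₂ <;>
    rcases trichotomous (r := r) a c with h₃ | h₃ | h₃ <;>
    simp_all [circOfLinear, coboundary, cmpSign, irrefl, asymm]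
  · exact asymm (_root_.trans h₁ h₂) h₃
  · exact asymm (_root_.trans h₂ h₁) h₃

end Coboundary

lemma isCircularOrder_of_values {α : Type*} {c : α → α → α → ℤ}
    (hdeg : ∀ x y z, (x = y ∨ y = z ∨ x = z) → c x y z = 0)
    (hnondeg : ∀ x y z, x ≠ y → y ≠ z → x ≠ z → c x y z = 1 ∨ c x y z = -1)
    (hcocycle : ∀ g₀ g₁ g₂ g₃, c g₁ g₂ g₃ - c g₀ g₂ g₃ + c g₀ g₁ g₃ - c g₀ g₁ g₂ = 0) :
    IsCircularOrder c := by
  refine ⟨fun x y z => ?_, fun x y z => ⟨fun h => ?_, hdeg x y z⟩, hcocycle⟩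
  · by_cases h : x = y ∨ y = z ∨ x = z
    · exact Or.inr (Or.inl (hdeg x y z h))
    · push Not at h
      rcases hnondeg x y z h.1 h.2.1 h.2.2 with h' | h' <;> simp [h']
  · by_contra h'
    push Not at h'
    rcases hnondeg x y z h'.1 h'.2.1 h'.2.2 with h'' | h'' <;> omega

section Lex

variable {G H : Type*} (π : G → H) (cH : H → H → H → ℤ) (R : G → G → Prop)

noncomputable def lexCirc (x y z : G) : ℤ :=
  cH (π x) (π y) (π z) + coboundary (cmpSign R) x y z

variable {π cH R}

lemma cmpSign_eq_zero_of_map_ne (hfib : ∀ a b, R a b → π a = π b) {a b : G} (h : π a ≠ π b) :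
    cmpSign R a b = 0 :=
  cmpSign_eq_zero_of_not_rel (fun hab => h (hfib a b hab)) (fun hba => h (hfib b a hba).symm)

lemma lexCirc_of_pairwise_ne (hfib : ∀ a b, R a b → π a = π b) {x y z : G}
    (hxy : π x ≠ π y) (hyz : π y ≠ π z) (hxz : π x ≠ π z) :
    lexCirc π cH R x y z = cH (π x) (π y) (π z) := by
  simp [lexCirc, coboundary, cmpSign_eq_zero_of_map_ne hfib, hxy, hyz, hxz]

variable [IsStrictOrder G R] (hcH : IsCircularOrder cH) (hfib : ∀ a b, R a b → π a = π b)
  (htot : ∀ a b, π a = π b → a ≠ b → R a b ∨ R b a)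
include hcH hfib htot

lemma lexCirc_eq_one_or_neg_one {x y z : G} (hxy : x ≠ y) (hyz : y ≠ z) (hxz : x ≠ z) :
    lexCirc π cH R x y z = 1 ∨ lexCirc π cH R x y z = -1 := by
  have zero : ∀ {a b}, π a ≠ π b → cmpSign R a b = 0 := cmpSign_eq_zero_of_map_ne hfib
  have unit : ∀ {a b}, π a = π b → a ≠ b → cmpSign R a b = 1 ∨ cmpSign R a b = -1 :=
    fun h h' => cmpSign_eq_one_or_neg_one (htot _ _ h h')
  have hH := hcH.2.1 (π x) (π y) (π z)
  by_cases h₁ : π x = π y <;> by_cases h₂ : π y = π z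
  · rw [lexCirc, hH.2 (Or.inl h₁), zero_add]
    exact coboundary_cmpSign_eq_one_or_neg_one (htot _ _ h₁ hxy) (htot _ _ h₂ hyz)
      (htot _ _ (h₁.trans h₂) hxz)
  · rw [lexCirc, coboundary, hH.2 (Or.inl h₁), zero h₂, zero fun h => h₂ (h₁.symm.trans h)]
    simpa using unit h₁ hxy
  · rw [lexCirc, coboundary, hH.2 (Or.inr (Or.inl h₂)), zero h₁,
      zero fun h => h₁ (h.trans h₂.symm)]
    simpa using unit h₂ hyz
  · by_cases h₃ : π x = π z
    · rw [lexCirc, coboundary, hH.2 (Or.inr (Or.inr h₃)), zero h₁, zero h₂]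
      rcases unit h₃ hxz with h | h <;> simp [h]
    · rw [lexCirc_of_pairwise_ne hfib h₁ h₂ h₃]
      rcases hcH.1 (π x) (π y) (π z) with h | h | h
      · exact Or.inr h
      · exact absurd (hH.1 h) (by tauto)
      · exact Or.inl h

theorem isCircularOrder_lexCirc : IsCircularOrder (lexCirc π cH R) := by
  refine isCircularOrder_of_values (fun x y z h => ?_)
    (fun x y z => lexCirc_eq_one_or_neg_one hcH hfib htot) (fun g₀ g₁ g₂ g₃ => ?_)
  · have hπ : π x = π y ∨ π y = π z ∨ π x = π z := by rcases h with h | h | h <;> simp [h]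
    rw [lexCirc, (hcH.2.1 _ _ _).2 hπ, coboundary_eq_zero_of_degenerate cmpSign_swap h, add_zero]
  · unfold lexCirc
    linarith [hcH.2.2 (π g₀) (π g₁) (π g₂) (π g₃), coboundary_cocycle (cmpSign R) g₀ g₁ g₂ g₃]

end Lex

theorem isLeftInvariant_lexCirc {G H : Type*} [Group G] [Group H] (π : G →* H)
    {cH : H → H → H → ℤ} {R : G → G → Prop} (hcH : IsLeftInvariant cH)
    (hR : ∀ g a b, R (g * a) (g * b) ↔ R a b) : IsLeftInvariant (lexCirc π cH R) := by
  intro g x y z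
  simp only [lexCirc, coboundary, map_mul, hcH (π g), cmpSign_map_map (hR g)]

section CosetOrder

variable {K G H : Type*} [Group K] [Group G] [Group H] {f : K →* G} {lt : K → K → Prop}

lemma IsLeftInvariantLinearOrder.mul_left_iff (hlt : IsLeftInvariantLinearOrder lt)
    (g a b : K) : lt (g * a) (g * b) ↔ lt a b :=
  ⟨fun h => by simpa using hlt.2 g⁻¹ _ _ h, hlt.2 g a b⟩

variable (f lt)

def cosetLT (a b : G) : Prop := ∃ k, lt 1 k ∧ a * f k = b

variable {f lt}

lemma cosetLT_mul_left_iff (g a b : G) : cosetLT f lt (g * a) (g * b) ↔ cosetLT f lt a b := by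
  simp only [cosetLT, mul_assoc, mul_right_inj]

lemma isStrictOrder_cosetLT (hf : Function.Injective f) (hlt : IsLeftInvariantLinearOrder lt) :
    IsStrictOrder G (cosetLT f lt) where
  irrefl a := by
    rintro ⟨k, hk, hak⟩
    obtain rfl : k = 1 := hf (by simpa using hak)
    exact hlt.1.irrefl 1 hk
  trans a b c := by
    rintro ⟨k, hk, rfl⟩ ⟨k', hk', rfl⟩
    have hkk' : lt k (k * k') := by simpa using (hlt.mul_left_iff k 1 k').2 hk'
    exact ⟨k * k', hlt.1.trans _ _ _ hk hkk', by rw [map_mul, mul_assoc]⟩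

lemma cosetLT_apply_apply_iff (hf : Function.Injective f) (hlt : IsLeftInvariantLinearOrder lt)
    (a b : K) : cosetLT f lt (f a) (f b) ↔ lt a b := by
  constructor
  · rintro ⟨k, hk, hab⟩
    obtain rfl : a * k = b := hf (by rw [map_mul, hab])
    simpa using (hlt.mul_left_iff a 1 k).2 hk
  · intro h
    exact ⟨a⁻¹ * b, by simpa using (hlt.mul_left_iff a⁻¹ a b).2 h, by simp⟩

variable {π : G →* H}

lemma map_eq_of_cosetLT (h : f.range ≤ π.ker) {a b : G} (hab : cosetLT f lt a b) : π a = π b := by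
  obtain ⟨k, -, rfl⟩ := hab
  have hk : π (f k) = 1 := h ⟨k, rfl⟩
  simp [hk]

lemma cosetLT_or_cosetLT_of_map_eq (h : π.ker ≤ f.range) (hlt : IsLeftInvariantLinearOrder lt)
    {a b : G} (hπ : π a = π b) (hab : a ≠ b) : cosetLT f lt a b ∨ cosetLT f lt b a := by
  obtain ⟨k, hk⟩ : a⁻¹ * b ∈ f.range := h (by simp [hπ])
  have hb : a * f k = b := by rw [hk, mul_inv_cancel_left]
  have := hlt.1
  rcases trichotomous (r := lt) 1 k with h₁ | rfl | h₁
  · exact Or.inl ⟨k, h₁, hb⟩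
  · exact absurd (by simpa using hb) hab
  · refine Or.inr ⟨k⁻¹, by simpa using (hlt.mul_left_iff k⁻¹ k 1).2 h₁, ?_⟩
    rw [← hb, map_inv, mul_inv_cancel_right]

end CosetOrder

theorem circularlyOrderable_of_ses_general {K G H : Type*} [Group K] [Group G] [Group H]
    (f : K →* G) (π : G →* H) (hf : Function.Injective f)
    (hexact : MonoidHom.range f = MonoidHom.ker π)
    (lt : K → K → Prop) (hlt : IsLeftInvariantLinearOrder lt)
    (cH : H → H → H → ℤ) (hcH : IsCircularOrder cH) (hlH : IsLeftInvariant cH) :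
    ∃ c : G → G → G → ℤ, IsCircularOrder c ∧ IsLeftInvariant c ∧
      (∀ k₁ k₂ k₃ : K, c (f k₁) (f k₂) (f k₃) = circOfLinear lt k₁ k₂ k₃) ∧
      (∀ g₁ g₂ g₃ : G, π g₁ ≠ π g₂ → π g₂ ≠ π g₃ → π g₁ ≠ π g₃ →
        c g₁ g₂ g₃ = cH (π g₁) (π g₂) (π g₃)) := by
  have := isStrictOrder_cosetLT hf hlt
  have := hlt.1
  have hfib : ∀ a b, cosetLT f lt a b → π a = π b := fun _ _ => map_eq_of_cosetLT hexact.le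
  have htot : ∀ a b, π a = π b → a ≠ b → cosetLT f lt a b ∨ cosetLT f lt b a :=
    fun _ _ => cosetLT_or_cosetLT_of_map_eq hexact.ge hlt
  refine ⟨lexCirc π cH (cosetLT f lt), isCircularOrder_lexCirc hcH hfib htot,
    isLeftInvariant_lexCirc π hlH cosetLT_mul_left_iff, fun k₁ k₂ k₃ => ?_,
    fun _ _ _ => lexCirc_of_pairwise_ne hfib⟩
  have hπf : ∀ k, π (f k) = 1 := fun k => hexact.le ⟨k, rfl⟩
  rw [lexCirc, hπf, hπf, hπf, (hcH.2.1 1 1 1).2 (Or.inl rfl), zero_add,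
    circOfLinear_eq_coboundary_cmpSign]
  simp only [coboundary, cmpSign_map_map (cosetLT_apply_apply_iff hf hlt)]

/-- Given a short exact sequence `0 → K → G → H → 0` with `K` left-orderable and
`H` circularly orderable, `G` admits a left-invariant circular order restricting
to the linear order on `K` and projecting to the circular order on `H`. -/
theorem circularlyOrderable_of_ses {K G H : Type*} [Group K] [Group G] [Group H]
    (f : K →* G) (π : G →* H) (hf : Function.Injective f)
    (hπ : Function.Surjective π) (hexact : MonoidHom.range f = MonoidHom.ker π)
    (lt : K → K → Prop) (hlt : IsLeftInvariantLinearOrder lt)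
    (cH : H → H → H → ℤ) (hcH : IsCircularOrder cH) (hlH : IsLeftInvariant cH) :
    ∃ c : G → G → G → ℤ, IsCircularOrder c ∧ IsLeftInvariant c ∧
      (∀ k₁ k₂ k₃ : K, c (f k₁) (f k₂) (f k₃) = circOfLinear lt k₁ k₂ k₃) ∧
      (∀ g₁ g₂ g₃ : G, π g₁ ≠ π g₂ → π g₂ ≠ π g₃ → π g₁ ≠ π g₃ →
        c g₁ g₂ g₃ = cH (π g₁) (π g₂) (π g₃)) :=
  circularlyOrderable_of_ses_general f π hf hexact lt hlt cH hcH hlH
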